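/- There exist constants c ∈ (0, 1/2), a real η₀ ≥ 1 and a natural number n₀ such that the following holds: for every n ≥ n₀, every integer m ≥ 2, every real η ≥ η₀ with m²·η·ln n ≤ c·n, and every nonempty family U of m-element subsets of [n] with κ(U) ≤ c·m·ln η, the family U contains a Δ-sunflower with Δ ≥ c·n/(m²·η·ln n) whose core has size at most 2·κ(U)/ln η; that is, there exist pairwise distinct sets s₁, …, s_Δ ∈ U and a set c₀ ⊆ [n] with |c₀| ≤ 2·κ(U)/ln η such that s_i ∩ s_j = c₀ for all i ≠ j. -/

import Mathlib

/-!
Take a maximal pairwise disjoint subfamily `M` of `U`. If it has `Δ` members, it is a sunflower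
with empty core. Otherwise its union has at most `Δ m` points and meets every set of `U`, so some
point `x` lies in at least `|U| / (Δ m)` of them. The link of `x` is a family of `(m - 1)`-sets
whose sparsity is smaller by `ln ((n - m + 1) / (Δ m²)) ≥ ln η`. Recursing on links, the
sparsity stays nonnegative and drops by at least `ln η` per step, so after at most
`κ(U) / ln η` steps we find `Δ` disjoint petals, and the removed points form the core. The
invariant `κ < k ln η` on `k`-uniform families keeps the recursion away from `k = 0`.
-/

open Finset

noncomputable def sparsity (n m : ℕ) (U : Finset (Finset ℕ)) : ℝ :=
  Real.log (n.choose m) - Real.log U.card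

section Families

variable {α : Type*} [DecidableEq α]

lemma exists_pairwiseDisjoint_subset_not_disjoint (V : Finset (Finset α)) :
    ∃ M ⊆ V, (M : Set (Finset α)).PairwiseDisjoint id ∧
      ∀ S ∈ V, S.Nonempty → ∃ T ∈ M, ¬Disjoint S T := by
  classical
  obtain ⟨M, hM, hmax⟩ := (V.powerset.filter fun M : Finset (Finset α) =>
    (M : Set (Finset α)).PairwiseDisjoint id).exists_max_image card ⟨∅, by simp⟩
  rw [mem_filter, mem_powerset] at hM
  refine ⟨M, hM.1, hM.2, fun S hS hSne => ?_⟩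
  by_contra! hdisj
  have hSM : S ∉ M := fun h => hSne.ne_empty (disjoint_self.1 (hdisj S h))
  have hins : (insert S M : Set (Finset α)).PairwiseDisjoint id :=
    hM.2.insert fun T hT _ => hdisj T hT
  have := hmax (insert S M)
    (mem_filter.2 ⟨mem_powerset.2 (insert_subset hS hM.1), by simpa using hins⟩)
  rw [card_insert_of_notMem hSM] at this
  omega

lemma exists_le_card_mul_card_filter_mem {V : Finset (Finset α)} {W : Finset α}
    (hW : W.Nonempty) (hcov : ∀ S ∈ V, ∃ x ∈ W, x ∈ S) :
    ∃ x ∈ W, V.card ≤ W.card * (V.filter (x ∈ ·)).card := by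
  refine exists_le_of_sum_le hW ?_
  rw [sum_const, smul_eq_mul, ← mul_sum]
  gcongr
  calc V.card ≤ (W.biUnion fun x => V.filter (x ∈ ·)).card := card_le_card fun S hS => by
        obtain ⟨x, hxW, hxS⟩ := hcov S hS
        exact mem_biUnion.2 ⟨x, hxW, mem_filter.2 ⟨hS, hxS⟩⟩
    _ ≤ _ := card_biUnion_le

lemma injective_union_of_disjoint {ι : Type*} {g : ι → Finset α} {C : Finset α}
    (hg : Function.Injective g) (hC : ∀ i, Disjoint (g i) C) :
    Function.Injective fun i => g i ∪ C := fun i j h => hg <| by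
  simpa [union_sdiff_cancel_right (hC i), union_sdiff_cancel_right (hC j)] using
    congrArg (· \ C) h

lemma union_inter_union_of_disjoint {a b : Finset α} (C : Finset α) (h : Disjoint a b) :
    (a ∪ C) ∩ (b ∪ C) = C := by
  rw [← inter_union_distrib_right, disjoint_iff_inter_eq_empty.1 h, empty_union]

def link (V : Finset (Finset α)) (x : α) : Finset (Finset α) :=
  (V.filter (x ∈ ·)).image (·.erase x)

lemma mem_link {V : Finset (Finset α)} {x : α} {T : Finset α} :
    T ∈ link V x ↔ x ∉ T ∧ insert x T ∈ V := by
  constructor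
  · intro h
    obtain ⟨S, hS, rfl⟩ := mem_image.1 h
    rw [mem_filter] at hS
    exact ⟨notMem_erase x S, by rw [insert_erase hS.2]; exact hS.1⟩
  · rintro ⟨hxT, hT⟩
    exact mem_image.2 ⟨insert x T, mem_filter.2 ⟨hT, mem_insert_self x T⟩, erase_insert hxT⟩

lemma card_link (V : Finset (Finset α)) (x : α) :
    (link V x).card = (V.filter (x ∈ ·)).card :=
  card_image_of_injOn fun _ hS _ hT => erase_injOn' x (mem_filter.1 hS).2 (mem_filter.1 hT).2

lemma link_subset_powersetCard {V : Finset (Finset α)} {s : Finset α} {k : ℕ} (x : α)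
    (hV : V ⊆ s.powersetCard (k + 1)) : link V x ⊆ s.powersetCard k := by
  intro T hT
  obtain ⟨hxT, hT⟩ := mem_link.1 hT
  obtain ⟨hTs, hcard⟩ := mem_powersetCard.1 (hV hT)
  rw [card_insert_of_notMem hxT] at hcard
  exact mem_powersetCard.2 ⟨(subset_insert x T).trans hTs, by omega⟩

lemma exists_pairwiseDisjoint_or_exists_le_card_link {V : Finset (Finset α)} {s : Finset α}
    {k : ℕ} (D : ℕ) (hne : V.Nonempty) (hV : V ⊆ s.powersetCard (k + 1)) :
    (∃ M ⊆ V, (M : Set (Finset α)).PairwiseDisjoint id ∧ D ≤ M.card) ∨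
      ∃ x ∈ s, V.card ≤ D * (k + 1) * (link V x).card := by
  obtain ⟨M, hMV, hMd, hmeet⟩ := exists_pairwiseDisjoint_subset_not_disjoint V
  refine (le_or_gt D M.card).imp (fun hD => ⟨M, hMV, hMd, hD⟩) fun hD => ?_
  have hcard : ∀ S ∈ V, S.card = k + 1 := fun S hS => (mem_powersetCard.1 (hV hS)).2
  have hcov : ∀ S ∈ V, ∃ x ∈ M.biUnion id, x ∈ S := by
    intro S hS
    obtain ⟨T, hT, hST⟩ := hmeet S hS (card_pos.1 (by rw [hcard S hS]; omega))
    obtain ⟨x, hxS, hxT⟩ := not_disjoint_iff.1 hST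
    exact ⟨x, mem_biUnion.2 ⟨T, hT, hxT⟩, hxS⟩
  obtain ⟨S, hS⟩ := hne
  obtain ⟨x₀, hx₀, -⟩ := hcov S hS
  obtain ⟨x, hxW, hx⟩ := exists_le_card_mul_card_filter_mem ⟨x₀, hx₀⟩ hcov
  obtain ⟨T, hT, hxT⟩ := mem_biUnion.1 hxW
  refine ⟨x, (mem_powersetCard.1 (hV (hMV hT))).1 hxT, hx.trans ?_⟩
  rw [card_link]
  gcongr
  calc (M.biUnion id).card ≤ M.card * (k + 1) :=
        card_biUnion_le_card_mul _ _ _ fun T hT => (hcard T (hMV hT)).le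
    _ ≤ D * (k + 1) := by gcongr

end Families

section Sparsity

variable {n k : ℕ}

lemma card_le_choose_of_subset_powersetCard {V : Finset (Finset ℕ)}
    (hV : V ⊆ (Icc 1 n).powersetCard k) : V.card ≤ n.choose k := by
  simpa using card_le_card hV

lemma sparsity_nonneg {V : Finset (Finset ℕ)} (hne : V.Nonempty)
    (hV : V ⊆ (Icc 1 n).powersetCard k) : 0 ≤ sparsity n k V :=
  sub_nonneg.2 <| Real.log_le_log (by exact_mod_cast hne.card_pos)
    (by exact_mod_cast card_le_choose_of_subset_powersetCard hV)

lemma sparsity_le_sparsity_succ_sub_log {L V : Finset (Finset ℕ)} {η : ℝ} (hη : 0 < η)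
    (hL : L.Nonempty) (hV : V.Nonempty) (hk : k < n)
    (hLV : (V.card : ℝ) * (k + 1) * η ≤ (n - k) * L.card) :
    sparsity n k L ≤ sparsity n (k + 1) V - Real.log η := by
  have hc : (0 : ℝ) < n.choose k := by exact_mod_cast Nat.choose_pos hk.le
  have hc' : (0 : ℝ) < n.choose (k + 1) := by exact_mod_cast Nat.choose_pos hk
  have hLc : (0 : ℝ) < L.card := by exact_mod_cast hL.card_pos
  have hVc : (0 : ℝ) < V.card := by exact_mod_cast hV.card_pos
  have hpascal : (n.choose (k + 1) : ℝ) * (k + 1) = n.choose k * (n - k) := by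
    rw [← Nat.cast_sub hk.le]; exact_mod_cast Nat.choose_succ_right_eq n k
  have key : (n.choose k : ℝ) * V.card * η ≤ n.choose (k + 1) * L.card := by
    refine le_of_mul_le_mul_right ?_ (by positivity : (0 : ℝ) < k + 1)
    calc (n.choose k : ℝ) * V.card * η * (k + 1) = n.choose k * (V.card * (k + 1) * η) := by ring
      _ ≤ n.choose k * ((n - k) * L.card) := by gcongr
      _ = n.choose (k + 1) * L.card * (k + 1) := by rw [← mul_assoc, ← hpascal]; ring
  have := Real.log_le_log (by positivity) key
  rw [Real.log_mul (by positivity) hη.ne', Real.log_mul hc.ne' hVc.ne',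
    Real.log_mul hc'.ne' hLc.ne'] at this
  unfold sparsity
  linarith

end Sparsity

theorem exists_core_petals_of_sparsity_lt {n D : ℕ} {η : ℝ} (hη : 1 < η) :
    ∀ {k : ℕ} {V : Finset (Finset ℕ)}, V.Nonempty → V ⊆ (Icc 1 n).powersetCard k →
      sparsity n k V < k * Real.log η → (D : ℝ) * k ^ 2 * η ≤ n - k + 1 →
      ∃ C ⊆ Icc 1 n, (C.card : ℝ) * Real.log η ≤ sparsity n k V ∧
        ∃ M : Finset (Finset ℕ), (M : Set (Finset ℕ)).PairwiseDisjoint id ∧ D ≤ M.card ∧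
          ∀ v ∈ M, Disjoint v C ∧ v ∪ C ∈ V := by
  intro k
  induction k with
  | zero =>
    intro V hne hV hκ _
    exact absurd (sparsity_nonneg hne hV) (by simpa using hκ)
  | succ k ih =>
    intro V hne hV hκ hD
    rcases exists_pairwiseDisjoint_or_exists_le_card_link D hne hV with
      ⟨M, hMV, hMd, hMD⟩ | ⟨x, hx, hlink⟩
    · exact ⟨∅, empty_subset _, by simpa using sparsity_nonneg hne hV, M, hMd, hMD,
        fun v hv => ⟨disjoint_empty_right v, by simpa using hMV hv⟩⟩
    set L := link V x
    have hLne : L.Nonempty := card_pos.1 <| Nat.pos_of_mul_pos_left <| hne.card_pos.trans_le hlink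
    have hLs : L ⊆ (Icc 1 n).powersetCard k := link_subset_powersetCard x hV
    have hkn : k < n := by
      have := hne.card_pos.trans_le (card_le_choose_of_subset_powersetCard hV)
      by_contra h
      rw [Nat.choose_eq_zero_of_lt (by omega)] at this
      omega
    have hηpos : 0 < η := one_pos.trans hη
    have hDk : (D : ℝ) * (k + 1) ^ 2 * η ≤ n - k := by push_cast at hD; linarith
    have hdrop : sparsity n k L ≤ sparsity n (k + 1) V - Real.log η := by
      refine sparsity_le_sparsity_succ_sub_log hηpos hLne hne hkn ?_
      have : (V.card : ℝ) ≤ D * (k + 1) * L.card := by exact_mod_cast hlink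
      calc (V.card : ℝ) * (k + 1) * η ≤ D * (k + 1) * L.card * (k + 1) * η := by gcongr
        _ = (D * (k + 1) ^ 2 * η) * L.card := by ring
        _ ≤ (n - k) * L.card := by gcongr
    obtain ⟨C, hC, hCκ, M, hMd, hMD, hM⟩ := ih hLne hLs (by push_cast at hκ; linarith) <| by
      calc (D : ℝ) * k ^ 2 * η ≤ D * (k + 1) ^ 2 * η := by gcongr; linarith
        _ ≤ (n : ℝ) - k + 1 := by linarith
    refine ⟨insert x C, insert_subset hx hC, ?_, M, hMd, hMD, fun v hv => ?_⟩
    · calc ((insert x C).card : ℝ) * Real.log η ≤ (C.card + 1) * Real.log η := by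
            gcongr
            · exact (Real.log_pos hη).le
            · exact_mod_cast card_insert_le x C
        _ ≤ sparsity n (k + 1) V := by linarith
    · obtain ⟨hvC, hvCL⟩ := hM v hv
      obtain ⟨hxvC, hins⟩ := mem_link.1 hvCL
      rw [notMem_union] at hxvC
      exact ⟨disjoint_insert_right.2 ⟨hxvC.1, hvC⟩, by rwa [union_insert]⟩

theorem exists_sunflower_of_sparsity_lt {n m D : ℕ} {η : ℝ} {U : Finset (Finset ℕ)} (hη : 1 < η)
    (hne : U.Nonempty) (hU : U ⊆ (Icc 1 n).powersetCard m)
    (hκ : sparsity n m U < m * Real.log η) (hD : (D : ℝ) * m ^ 2 * η ≤ n - m + 1) :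
    ∃ (Δ : ℕ) (f : Fin Δ → Finset ℕ) (c₀ : Finset ℕ), D ≤ Δ ∧ c₀ ⊆ Icc 1 n ∧
      (c₀.card : ℝ) * Real.log η ≤ sparsity n m U ∧ Function.Injective f ∧
      (∀ i, f i ∈ U) ∧ ∀ i j, i ≠ j → f i ∩ f j = c₀ := by
  obtain ⟨C, hC, hCκ, M, hMd, hMD, hM⟩ := exists_core_petals_of_sparsity_lt hη hne hU hκ hD
  have hg : Function.Injective fun i => (M.equivFin.symm i : Finset ℕ) :=
    Subtype.val_injective.comp M.equivFin.symm.injective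
  refine ⟨M.card, fun i => (M.equivFin.symm i : Finset ℕ) ∪ C, C, hMD, hC, hCκ,
    injective_union_of_disjoint hg fun i => (hM _ (coe_mem _)).1,
    fun i => (hM _ (coe_mem _)).2, fun i j hij => ?_⟩
  exact union_inter_union_of_disjoint C (hMd (coe_mem _) (coe_mem _) (hg.ne hij))

lemma ceil_mul_sq_mul_le {n m : ℕ} {η : ℝ} (hn : 1 ≤ Real.log n) (hm : 1 ≤ m) (hη : 1 ≤ η)
    (h : (m : ℝ) ^ 2 * η * Real.log n ≤ 1 / 100 * n) :
    (⌈1 / 100 * n / ((m : ℝ) ^ 2 * η * Real.log n)⌉₊ : ℝ) * m ^ 2 * η ≤ n - m + 1 := by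
  set r := 1 / 100 * n / ((m : ℝ) ^ 2 * η * Real.log n) with hr_def
  have hm1 : (1 : ℝ) ≤ m := by exact_mod_cast hm
  have hr : 1 ≤ r := (one_le_div (by positivity)).2 h
  have hmn : (m : ℝ) ≤ 1 / 100 * n := calc
    (m : ℝ) ≤ m ^ 2 * η * Real.log n := by nlinarith [mul_le_mul hη hn zero_le_one (by linarith)]
    _ ≤ 1 / 100 * n := h
  calc (⌈r⌉₊ : ℝ) * m ^ 2 * η ≤ 2 * r * m ^ 2 * η := by
        gcongr; exact Nat.ceil_le_two_mul (by linarith)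
    _ = 1 / 50 * n / Real.log n := by rw [hr_def]; field_simp; ring
    _ ≤ 1 / 50 * n := div_le_self (by positivity) hn
    _ ≤ n - m + 1 := by linarith

theorem stmt_17 :
    ∃ c : ℝ, 0 < c ∧ c < 1 / 2 ∧ ∃ η₀ : ℝ, 1 ≤ η₀ ∧ ∃ n₀ : ℕ,
      ∀ n : ℕ, n₀ ≤ n → ∀ m : ℕ, 2 ≤ m →
      ∀ η : ℝ, η₀ ≤ η → (m : ℝ) ^ 2 * η * Real.log n ≤ c * n →
      ∀ U : Finset (Finset ℕ), U.Nonempty → U ⊆ (Finset.Icc 1 n).powersetCard m →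
      sparsity n m U ≤ c * m * Real.log η →
      ∃ (Δ : ℕ) (f : Fin Δ → Finset ℕ) (c₀ : Finset ℕ),
        (Δ : ℝ) ≥ c * n / ((m : ℝ) ^ 2 * η * Real.log n) ∧
        c₀ ⊆ Finset.Icc 1 n ∧
        (c₀.card : ℝ) ≤ 2 * sparsity n m U / Real.log η ∧
        Function.Injective f ∧
        (∀ i, f i ∈ U) ∧
        (∀ i j, i ≠ j → f i ∩ f j = c₀) := by
  refine ⟨1 / 100, by norm_num, by norm_num, 2, by norm_num, 3, ?_⟩
  intro n hn m hm η hη h U hne hU hκ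
  have hlogη : 0 < Real.log η := Real.log_pos (by linarith)
  have hlogn : 1 ≤ Real.log n := by
    rw [Real.le_log_iff_exp_le (by positivity)]
    have : (3 : ℝ) ≤ n := by exact_mod_cast hn
    linarith [Real.exp_one_lt_d9]
  obtain ⟨Δ, f, c₀, hΔ, hc₀, hc₀κ, hf, hfU, hfc₀⟩ :=
    exists_sunflower_of_sparsity_lt (by linarith) hne hU
      (hκ.trans_lt (by nlinarith [mul_pos (by positivity : (0 : ℝ) < m) hlogη]))
      (ceil_mul_sq_mul_le hlogn (by omega) (by linarith) h)
  refine ⟨Δ, f, c₀, (Nat.le_ceil _).trans (by exact_mod_cast hΔ), hc₀, ?_, hf, hfU, hfc₀⟩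
  rw [le_div_iff₀ hlogη]
  linarith [sparsity_nonneg hne hU]
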